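/- arXiv:1304.0498 — 5 statements merged into one kernel-verified Lean document; each statement's English description precedes it below -/
import Mathlib

section
/- For a free group F of finite rank r and all integers m, n ≥ 1, the commutator subgroup generated by commutators of elements of A_m and A_n is contained in A_{m+n}; that is, [A_m, A_n] ≤ A_{m+n}. In particular, (A_n)_{n≥1} is a central filtration of A_1. -/
/-!
Write `γ k` for the lower central series with `γ 0 = G`, so that `φ ∈ A_m` says `φ ≡ id` modulo
`γ m`. From the three subgroups lemma, `⁅γ a, γ b⁆ ≤ γ (a + b + 1)`. Hence if `φ ≡ id` modulo `γ m`,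
then by induction along `γ (j + 1) = ⁅γ j, G⁆` it is the identity on `γ j` modulo `γ (j + m)`: writing
`φ x = x u` and `φ y = y v`, the factor `u` is central and `v` commutes with `x` modulo `γ (j + m + 1)`,
so `φ ⁅x, y⁆ ≡ ⁅x, y⁆`. Finally, for `φ ∈ A_m`, `ψ ∈ A_n` write `φ h = h a` and `ψ h = h b`; modulo
`γ (m + n)` both automorphisms fix `a` and `b`, which commute, so `ψ (φ h) ≡ h b a ≡ h a b ≡ φ (ψ h)`.
-/

def Andre (r n : ℕ) : Subgroup (MulAut (FreeGroup (Fin r))) where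
  carrier := { φ | ∀ g : FreeGroup (Fin r),
      g⁻¹ * φ g ∈ (⊤ : Subgroup (FreeGroup (Fin r))).lowerCentralSeries n }
  one_mem' := by
    intro g
    simp
  mul_mem' := by
    intro φ ψ hφ hψ g
    have key : g⁻¹ * (φ * ψ) g = (g⁻¹ * ψ g) * ((ψ g)⁻¹ * φ (ψ g)) := by
      rw [MulAut.mul_apply]; group
    rw [key]
    exact mul_mem (hψ g) (hφ (ψ g))
  inv_mem' := by
    intro φ hφ g
    have h := hφ (φ⁻¹ g)
    rw [show φ (φ⁻¹ g) = g from φ.apply_symm_apply g] at h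
    have h2 := inv_mem h
    simpa [mul_inv_rev] using h2

open scoped commutatorElement

theorem QuotientGroup.commute_mk_of_commutatorElement_mem {G : Type*} [Group G]
    {N : Subgroup G} [N.Normal] {x y : G} (h : ⁅x, y⁆ ∈ N) : Commute (x : G ⧸ N) y := by
  rw [← commutatorElement_eq_one_iff_commute, ← QuotientGroup.mk'_apply, ← QuotientGroup.mk'_apply,
    ← map_commutatorElement, QuotientGroup.mk'_apply, QuotientGroup.eq_one_iff]
  exact h

theorem commutatorElement_mul_mul_eq {Q : Type*} [Group Q] {X Y U V : Q}
    (hU : U ∈ Subgroup.center Q) (hXV : Commute X V) : ⁅X * U, Y * V⁆ = ⁅X, Y⁆ := by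
  calc ⁅X * U, Y * V⁆ = X * (U * (Y * V)) * U⁻¹ * X⁻¹ * (Y * V)⁻¹ := by group
    _ = X * Y * (V * X⁻¹) * V⁻¹ * Y⁻¹ := by rw [← Subgroup.mem_center_iff.mp hU]; group
    _ = ⁅X, Y⁆ := by rw [← hXV.inv_left.eq]; group

theorem Subgroup.commutator_commutator_le_of_rotate {G : Type*} [Group G]
    {H₁ H₂ H₃ N : Subgroup G} [N.Normal]
    (h1 : ⁅⁅H₂, H₃⁆, H₁⁆ ≤ N) (h2 : ⁅⁅H₃, H₁⁆, H₂⁆ ≤ N) : ⁅⁅H₁, H₂⁆, H₃⁆ ≤ N := by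
  rw [← QuotientGroup.ker_mk' N, ← Subgroup.map_eq_bot_iff] at h1 h2 ⊢
  rw [Subgroup.map_commutator, Subgroup.map_commutator] at h1 h2 ⊢
  exact Subgroup.commutator_commutator_eq_bot_of_rotate h1 h2

section LowerCentralSeries

variable {G : Type*} [Group G]

local notation "γ" => Subgroup.lowerCentralSeries (⊤ : Subgroup G)

theorem Subgroup.commutator_lowerCentralSeries_le (a b : ℕ) : ⁅γ a, γ b⁆ ≤ γ (a + b + 1) := by
  induction b generalizing a with
  | zero => exact le_rfl
  | succ b ih =>
    rw [lowerCentralSeries_succ, commutator_comm (γ a)]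
    refine commutator_commutator_le_of_rotate ?_ ?_
    · rw [commutator_comm ⊤, ← lowerCentralSeries_succ]
      convert ih (a + 1) using 2
      omega
    · exact commutator_mono (ih a) le_rfl

theorem MulAut.inv_mul_apply_mem_lowerCentralSeries_add {m : ℕ} {φ : MulAut G}
    (hφ : ∀ g, g⁻¹ * φ g ∈ γ m) : ∀ j, ∀ h ∈ γ j, h⁻¹ * φ h ∈ γ (j + m)
  | 0, h, _ => by simpa using hφ h
  | j + 1, h, hh => by
    let π := QuotientGroup.mk' (γ (j + 1 + m))
    suffices γ (j + 1) ≤ π.eqLocus (π.comp φ.toMonoidHom) from QuotientGroup.eq.mp (this hh)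
    refine Subgroup.commutator_le.mpr fun x hx y _ => ?_
    have hu : π (x⁻¹ * φ x) ∈ Subgroup.center (G ⧸ γ (j + 1 + m)) := by
      refine Subgroup.mem_center_iff.mpr fun q => QuotientGroup.induction_on q fun z => ?_
      refine (QuotientGroup.commute_mk_of_commutatorElement_mem ?_).eq.symm
      have := Subgroup.commutator_mem_commutator
        (inv_mul_apply_mem_lowerCentralSeries_add hφ j x hx) (Subgroup.mem_top z)
      rwa [← Subgroup.lowerCentralSeries_succ, Nat.add_right_comm] at this
    have hv : Commute (π x) (π (y⁻¹ * φ y)) := by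
      refine QuotientGroup.commute_mk_of_commutatorElement_mem ?_
      have := Subgroup.commutator_lowerCentralSeries_le j m
        (Subgroup.commutator_mem_commutator hx (hφ y))
      rwa [Nat.add_right_comm] at this
    have hφx : π (φ x) = π x * π (x⁻¹ * φ x) := by rw [← map_mul, mul_inv_cancel_left]
    have hφy : π (φ y) = π y * π (y⁻¹ * φ y) := by rw [← map_mul, mul_inv_cancel_left]
    show π ⁅x, y⁆ = π (φ ⁅x, y⁆)
    rw [map_commutatorElement φ, map_commutatorElement π, map_commutatorElement π, hφx, hφy,
      commutatorElement_mul_mul_eq hu hv]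

theorem MulAut.inv_mul_commutatorElement_apply_mem {m n : ℕ} {φ ψ : MulAut G}
    (hφ : ∀ g, g⁻¹ * φ g ∈ γ m) (hψ : ∀ g, g⁻¹ * ψ g ∈ γ n) (g : G) :
    g⁻¹ * ⁅φ, ψ⁆ g ∈ γ (m + n) := by
  obtain ⟨h, rfl⟩ : ∃ h, ψ (φ h) = g := ⟨φ⁻¹ (ψ⁻¹ g), by simp⟩
  have hφψ : ⁅φ, ψ⁆ (ψ (φ h)) = φ (ψ h) := by simp [commutatorElement_def]
  rw [hφψ, ← QuotientGroup.eq]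
  obtain ⟨a, ha, hφh⟩ : ∃ a ∈ γ m, φ h = h * a := ⟨_, hφ h, (mul_inv_cancel_left h _).symm⟩
  obtain ⟨b, hb, hψh⟩ : ∃ b ∈ γ n, ψ h = h * b := ⟨_, hψ h, (mul_inv_cancel_left h _).symm⟩
  have hψa : ((ψ a : G) : G ⧸ γ (m + n)) = a :=
    (QuotientGroup.eq.mpr (inv_mul_apply_mem_lowerCentralSeries_add hψ m a ha)).symm
  have hφb : ((φ b : G) : G ⧸ γ (m + n)) = b := by
    refine (QuotientGroup.eq.mpr ?_).symm
    rw [add_comm]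
    exact inv_mul_apply_mem_lowerCentralSeries_add hφ n b hb
  have hab : Commute (a : G ⧸ γ (m + n)) b :=
    QuotientGroup.commute_mk_of_commutatorElement_mem <|
      Subgroup.lowerCentralSeries_antitone _ (Nat.le_succ _) <|
        Subgroup.commutator_lowerCentralSeries_le m n (Subgroup.commutator_mem_commutator ha hb)
  calc ((ψ (φ h) : G) : G ⧸ γ (m + n)) = h * b * a := by
        rw [hφh, map_mul, hψh, QuotientGroup.mk_mul, QuotientGroup.mk_mul, hψa]
    _ = h * a * b := by rw [mul_assoc, ← hab.eq, ← mul_assoc]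
    _ = φ (ψ h) := by
        rw [hψh, map_mul, hφh, QuotientGroup.mk_mul, QuotientGroup.mk_mul, hφb]

end LowerCentralSeries

theorem andre_commutator_le_general (r m n : ℕ) :
    ⁅Andre r m, Andre r n⁆ ≤ Andre r (m + n) :=
  Subgroup.commutator_le.mpr fun _ hφ _ hψ => MulAut.inv_mul_commutatorElement_apply_mem hφ hψ

/-- `[A_m, A_n] ≤ A_{m+n}`: the Andreadakis subgroups form a central filtration. -/
theorem andre_commutator_le (r m n : ℕ) (hm : 1 ≤ m) (hn : 1 ≤ n) :
    ⁅Andre r m, Andre r n⁆ ≤ Andre r (m + n) :=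
  andre_commutator_le_general r m n
end

section
/- For a free group F of finite rank r and every n ≥ 1, the n-th term γ_n(A_1) of the lower central series of A_1 is contained in A_n. -/
open scoped commutatorElement

namespace Subgroup

variable {G : Type*} [Group G]

theorem commutator_commutator_le_of_rotate_s1 {A B C N : Subgroup G} [N.Normal]
    (h1 : ⁅⁅B, C⁆, A⁆ ≤ N) (h2 : ⁅⁅C, A⁆, B⁆ ≤ N) : ⁅⁅A, B⁆, C⁆ ≤ N := by
  have mod_N : ∀ X Y Z : Subgroup G, ⁅⁅X, Y⁆, Z⁆ ≤ N ↔
      ⁅⁅X.map (QuotientGroup.mk' N), Y.map (QuotientGroup.mk' N)⁆,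
        Z.map (QuotientGroup.mk' N)⁆ = ⊥ := by
    intro X Y Z
    rw [← map_commutator, ← map_commutator, eq_bot_iff, map_le_iff_le_comap,
      MonoidHom.comap_bot, QuotientGroup.ker_mk']
  rw [mod_N] at h1 h2 ⊢
  exact commutator_commutator_eq_bot_of_rotate h1 h2

theorem commutator_lowerCentralSeries_le_s1 (m n : ℕ) :
    ⁅(⊤ : Subgroup G).lowerCentralSeries m, (⊤ : Subgroup G).lowerCentralSeries n⁆ ≤
      (⊤ : Subgroup G).lowerCentralSeries (m + n + 1) := by
  induction n generalizing m with
  | zero => exact le_rfl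
  | succ n ih =>
    rw [lowerCentralSeries_succ, commutator_comm]
    apply commutator_commutator_le_of_rotate_s1
    · rw [commutator_comm ⊤, ← lowerCentralSeries_succ]
      exact (ih (m + 1)).trans_eq (by congr 1; omega)
    · exact commutator_mono (ih m) le_rfl

end Subgroup

namespace MulAut

variable {G : Type*} [Group G]

/-- The elements whose class in `G ⧸ N` is fixed by `φ`. -/
def fixedModulo (φ : MulAut G) (N : Subgroup G) [N.Normal] : Subgroup G :=
  (QuotientGroup.mk' N).eqLocus ((QuotientGroup.mk' N).comp φ.toMonoidHom)

theorem mem_fixedModulo {φ : MulAut G} {N : Subgroup G} [N.Normal] {g : G} :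
    g ∈ fixedModulo φ N ↔ g⁻¹ * φ g ∈ N :=
  QuotientGroup.eq

variable (G) in
/-- The Andreadakis filtration; with Mathlib's `0`-indexed lower central series, `andreadakis G n`
is the kernel of `Aut G → Aut (G ⧸ γ_{n+1} G)`. -/
def andreadakis (n : ℕ) : Subgroup (MulAut G) where
  carrier := {φ | ∀ g : G, g⁻¹ * φ g ∈ (⊤ : Subgroup G).lowerCentralSeries n}
  one_mem' g := by simp
  mul_mem' {φ ψ} hφ hψ g := by
    have split : g⁻¹ * (φ * ψ) g = (g⁻¹ * ψ g) * ((ψ g)⁻¹ * φ (ψ g)) := by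
      rw [mul_apply]; group
    rw [split]
    exact mul_mem (hψ g) (hφ (ψ g))
  inv_mem' {φ} hφ g := by
    simpa [mul_inv_rev] using inv_mem (hφ (φ⁻¹ g))

theorem andreadakis_antitone : Antitone (andreadakis G) :=
  fun _ _ hmn _ hφ g => Subgroup.lowerCentralSeries_antitone ⊤ hmn (hφ g)

theorem lowerCentralSeries_le_fixedModulo {φ : MulAut G} {m : ℕ} (hφ : φ ∈ andreadakis G m)
    (k : ℕ) :
    (⊤ : Subgroup G).lowerCentralSeries k ≤
      fixedModulo φ ((⊤ : Subgroup G).lowerCentralSeries (k + m)) := by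
  induction k with
  | zero => intro g _; simpa [mem_fixedModulo] using hφ g
  | succ k ih =>
    rw [Subgroup.lowerCentralSeries_succ, Subgroup.commutator_le]
    intro x hx y _
    rw [mem_fixedModulo, show k + 1 + m = k + m + 1 by omega]
    set a := x⁻¹ * φ x
    set b := y⁻¹ * φ y
    have hN : ((⊤ : Subgroup G).lowerCentralSeries (k + m + 1)).Normal := inferInstance
    have hxb : ⁅x, b⁆ ∈ (⊤ : Subgroup G).lowerCentralSeries (k + m + 1) :=
      Subgroup.commutator_lowerCentralSeries_le_s1 k m
        (Subgroup.commutator_mem_commutator hx (hφ y))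
    have hayb : ⁅a, y * b⁆ ∈ (⊤ : Subgroup G).lowerCentralSeries (k + m + 1) :=
      Subgroup.commutator_mem_commutator (mem_fixedModulo.1 (ih hx)) (Subgroup.mem_top _)
    -- modulo the normal subgroup on the right, `a` is central and `b` commutes with `x`, so `⁅x a, y b⁆ ≡ ⁅x, y⁆`
    have split : ⁅x, y⁆⁻¹ * φ ⁅x, y⁆ =
        (⁅x, y⁆⁻¹ * (x * ⁅a, y * b⁆ * x⁻¹) * ⁅x, y⁆) * (y * ⁅x, b⁆ * y⁻¹) := by
      simp only [a, b, commutatorElement_def, map_mul, map_inv]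
      group
    rw [split]
    exact mul_mem (by simpa using hN.conj_mem _ (hN.conj_mem _ hayb x) ⁅x, y⁆⁻¹)
      (hN.conj_mem _ hxb y)

theorem commutatorElement_mem_andreadakis {φ ψ : MulAut G} {m n : ℕ}
    (hφ : φ ∈ andreadakis G m) (hψ : ψ ∈ andreadakis G n) :
    ⁅φ, ψ⁆ ∈ andreadakis G (m + n) := by
  intro g
  obtain ⟨h, rfl⟩ : ∃ h : G, ψ (φ h) = g := ⟨φ⁻¹ (ψ⁻¹ g), by simp [inv_def]⟩
  have apply_commutator : ⁅φ, ψ⁆ (ψ (φ h)) = φ (ψ h) := by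
    simp [commutatorElement_def, mul_apply, inv_def]
  rw [apply_commutator]
  set a := h⁻¹ * φ h
  set b := h⁻¹ * ψ h
  have ha : a ∈ (⊤ : Subgroup G).lowerCentralSeries m := hφ h
  have hb : b ∈ (⊤ : Subgroup G).lowerCentralSeries n := hψ h
  have hψa : a⁻¹ * ψ a ∈ (⊤ : Subgroup G).lowerCentralSeries (m + n) :=
    mem_fixedModulo.1 (lowerCentralSeries_le_fixedModulo hψ m ha)
  have hφb : b⁻¹ * φ b ∈ (⊤ : Subgroup G).lowerCentralSeries (m + n) := by
    rw [add_comm m n]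
    exact mem_fixedModulo.1 (lowerCentralSeries_le_fixedModulo hφ n hb)
  have hab : ⁅a⁻¹, b⁻¹⁆ ∈ (⊤ : Subgroup G).lowerCentralSeries (m + n) :=
    Subgroup.lowerCentralSeries_antitone ⊤ (Nat.le_succ _)
      (Subgroup.commutator_lowerCentralSeries_le_s1 m n
        (Subgroup.commutator_mem_commutator (inv_mem ha) (inv_mem hb)))
  have split : (ψ (φ h))⁻¹ * φ (ψ h) = (a⁻¹ * ψ a)⁻¹ * ⁅a⁻¹, b⁻¹⁆ * (b⁻¹ * φ b) := by
    simp only [a, b, commutatorElement_def, map_mul, map_inv]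
    group
  rw [split]
  exact mul_mem (mul_mem (inv_mem hψa) hab) hφb

theorem commutator_andreadakis_le (m n : ℕ) :
    ⁅andreadakis G m, andreadakis G n⁆ ≤ andreadakis G (m + n) :=
  Subgroup.commutator_le.2 fun _ hφ _ hψ => commutatorElement_mem_andreadakis hφ hψ

theorem lowerCentralSeries_andreadakis_le (m k : ℕ) :
    (andreadakis G m).lowerCentralSeries k ≤ andreadakis G ((k + 1) * m) := by
  induction k with
  | zero => simp
  | succ k ih =>
    rw [Subgroup.lowerCentralSeries_succ]
    exact (Subgroup.commutator_mono ih le_rfl).trans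
      ((commutator_andreadakis_le _ m).trans_eq (congrArg _ (by ring)))

end MulAut

theorem andre_eq_andreadakis (r n : ℕ) : Andre r n = MulAut.andreadakis (FreeGroup (Fin r)) n :=
  rfl

theorem lowerCentralSeries_A1_le_andre_general (r n : ℕ) :
    ((⊤ : Subgroup ↥(Andre r 1)).lowerCentralSeries (n - 1)).map (Andre r 1).subtype ≤ Andre r n := by
  rw [Subgroup.top_subtype_lowerCentralSeries, andre_eq_andreadakis, andre_eq_andreadakis]
  calc (MulAut.andreadakis _ 1).lowerCentralSeries (n - 1)
      ≤ MulAut.andreadakis _ ((n - 1 + 1) * 1) :=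
        MulAut.lowerCentralSeries_andreadakis_le 1 (n - 1)
    _ ≤ MulAut.andreadakis _ n := MulAut.andreadakis_antitone (by omega)

/-- `γ_n(A_1) ≤ A_n`. Here `γ_n(A_1) = lowerCentralSeries ↥(Andre r 1) (n-1)`,
viewed inside `Aut(F)` via the inclusion of `A_1`. -/
theorem lowerCentralSeries_A1_le_andre (r n : ℕ) (hn : 1 ≤ n) :
    ((⊤ : Subgroup ↥(Andre r 1)).lowerCentralSeries (n - 1)).map (Andre r 1).subtype ≤ Andre r n :=
  lowerCentralSeries_A1_le_andre_general r n
end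

section
/- Let F be the free group on two generators x, y. The endomorphism φ of F determined by φ(x) = x·[[x,y],[[x,y],y]] and φ(y) = y is not an automorphism of F (it is not surjective). -/
namespace BGLMExample

/-- The generator `x` of the free group of rank 2. -/
def x : FreeGroup (Fin 2) := FreeGroup.of 0

/-- The generator `y` of the free group of rank 2. -/
def y : FreeGroup (Fin 2) := FreeGroup.of 1

/-- The commutator `[u,v] = u⁻¹v⁻¹uv`. -/
def c (u v : FreeGroup (Fin 2)) : FreeGroup (Fin 2) := u⁻¹ * v⁻¹ * u * v

/-- The endomorphism `φ` of `F = ⟨x,y⟩` with `φ(x) = x·[[x,y],[[x,y],y]]` and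
`φ(y) = y`. -/
def φ : FreeGroup (Fin 2) →* FreeGroup (Fin 2) :=
  FreeGroup.lift (fun i : Fin 2 =>
    if i = 0 then x * c (c x y) (c (c x y) y) else y)

/-!
Send `x ↦ (0 1)` and `y ↦ (1 2 3)` in `S₄`. Then `[[x,y],[[x,y],y]] ↦ (0 1)(2 3)`, so
`φ(x) ↦ (2 3)`, and `φ(y) = y ↦ (1 2 3)`: both images fix `0`, hence so does the image of
every element of `φ(F)`. But `x ↦ (0 1)` moves `0`, so `x ∉ φ(F)`.
-/

open Equiv MulAction

def ρ : FreeGroup (Fin 2) →* Perm (Fin 4) :=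
  FreeGroup.lift ![swap 0 1, c[1, 2, 3]]

lemma ρ_x : ρ x = swap 0 1 := FreeGroup.lift_apply_of

lemma ρ_y : ρ y = c[1, 2, 3] := FreeGroup.lift_apply_of

lemma φ_x : φ x = x * c (c x y) (c (c x y) y) := FreeGroup.lift_apply_of.trans (if_pos rfl)

lemma φ_y : φ y = y := FreeGroup.lift_apply_of.trans (if_neg one_ne_zero)

lemma ρ_φ_x : ρ (φ x) = swap 2 3 := by
  simp only [φ_x, c, map_mul, map_inv, ρ_x, ρ_y]
  decide +kernel

def stabilizerZero : Subgroup (FreeGroup (Fin 2)) :=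
  (stabilizer (Perm (Fin 4)) (0 : Fin 4)).comap ρ

lemma mem_stabilizerZero {g : FreeGroup (Fin 2)} : g ∈ stabilizerZero ↔ ρ g 0 = 0 :=
  mem_stabilizer_iff

lemma range_φ_le_stabilizerZero : φ.range ≤ stabilizerZero := by
  refine FreeGroup.range_lift_le (Set.range_subset_iff.2 (Fin.forall_fin_two.2 ⟨?_, ?_⟩))
  · rw [if_pos rfl, ← φ_x, SetLike.mem_coe, mem_stabilizerZero, ρ_φ_x]
    decide
  · rw [if_neg one_ne_zero, SetLike.mem_coe, mem_stabilizerZero, ρ_y]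
    decide

lemma x_not_mem_stabilizerZero : x ∉ stabilizerZero := by
  rw [mem_stabilizerZero, ρ_x]
  decide

/-- The endomorphism `x ↦ x·[[x,y],[[x,y],y]]`, `y ↦ y` of the free group of
rank 2 is not an automorphism: it is not surjective. -/
theorem phi_not_automorphism :
    ¬ Function.Surjective ⇑φ ∧
    ¬ ∃ e : FreeGroup (Fin 2) ≃* FreeGroup (Fin 2), ∀ g, e g = φ g := by
  have not_surjective : ¬ Function.Surjective ⇑φ := fun hφ =>
    x_not_mem_stabilizerZero (range_φ_le_stabilizerZero (hφ x))
  refine ⟨not_surjective, fun ⟨e, he⟩ => not_surjective ?_⟩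
  rw [← funext he]
  exact e.surjective

end BGLMExample
end

section
/- Let n be a positive integer and ℓ a positive divisor of n. Then φ(ℓ) · ∑_{d : ℓ ∣ d ∣ n} μ(d)·(n/d) = μ(ℓ)·φ(n), where the sum ranges over all divisors d of n that are multiples of ℓ, μ denotes the Möbius function and φ denotes the Euler totient function. -/
/-!
Write `n = ℓ k` and `d = ℓ m`. Since `μ (ℓ m) = μ ℓ μ m` when `gcd(ℓ, m) = 1` and `0` otherwise,
the sum is `μ ℓ · k · ∑_{m ∣ k} μ m [gcd(m, ℓ) = 1] / m = μ ℓ · k · ∏_{p ∣ k, p ∤ ℓ} (1 - 1/p)`.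
Multiplying by `φ ℓ = ℓ ∏_{p ∣ ℓ} (1 - 1/p)` completes the product to Euler's product for `φ (ℓ k)`.
-/

open Finset
open scoped ArithmeticFunction.Moebius

namespace Nat

theorem sum_divisors_filter_dvd_mul {M : Type*} [AddCommMonoid M] (f : ℕ → M) {a : ℕ}
    (ha : a ≠ 0) (b : ℕ) :
    ∑ d ∈ (a * b).divisors with a ∣ d, f d = ∑ m ∈ b.divisors, f (a * m) := by
  rcases eq_or_ne b 0 with rfl | hb
  · simp
  have ha' : 0 < a := pos_of_ne_zero ha
  refine (sum_nbij' (a * ·) (· / a) ?_ ?_ ?_ ?_ fun _ _ => rfl).symm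
  · intro m hm
    simp_all [Nat.mul_dvd_mul_left a (dvd_of_mem_divisors hm)]
  · rintro d hd
    obtain ⟨⟨had, -⟩, m, rfl⟩ := by simpa only [mem_filter, mem_divisors] using hd
    simp_all [Nat.mul_div_cancel_left m ha', (Nat.mul_dvd_mul_iff_left ha').1 had]
  · exact fun m _ => Nat.mul_div_cancel_left m ha'
  · exact fun d hd => Nat.mul_div_cancel' (mem_filter.1 hd).2

theorem totient_mul_eq_totient_mul_prod {ℓ k : ℕ} (hℓ : ℓ ≠ 0) (hk : k ≠ 0) :
    (φ (ℓ * k) : ℚ) = φ ℓ * (k * ∏ p ∈ k.primeFactors with ¬p ∣ ℓ, (1 - (p : ℚ)⁻¹)) := by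
  have hunion : (ℓ * k).primeFactors = ℓ.primeFactors ∪ {p ∈ k.primeFactors | ¬p ∣ ℓ} := by
    ext p
    simp only [primeFactors_mul hℓ hk, mem_union, mem_filter, mem_primeFactors]
    tauto
  have hdisj : Disjoint ℓ.primeFactors {p ∈ k.primeFactors | ¬p ∣ ℓ} :=
    disjoint_right.2 fun _ hp hpℓ => (mem_filter.1 hp).2 (dvd_of_mem_primeFactors hpℓ)
  rw [totient_eq_mul_prod_factors, totient_eq_mul_prod_factors, hunion, prod_union hdisj]
  push_cast
  ring

end Nat

namespace ArithmeticFunction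

theorem moebius_mul_eq_ite (a b : ℕ) :
    μ (a * b) = if a.Coprime b then μ a * μ b else 0 := by
  split_ifs with h
  · exact isMultiplicative_moebius.map_mul_of_coprime h
  · exact moebius_eq_zero_of_not_squarefree fun hsq => h (Nat.squarefree_mul_iff.1 hsq).1

/-- Only squarefree divisors contribute, and these are exactly the divisors of the radical. -/
theorem sum_divisors_moebius_mul_eq_prod_one_sub {R : Type*} [CommRing R]
    {f : ArithmeticFunction R} (hf : f.IsMultiplicative) {n : ℕ} (hn : n ≠ 0) :
    ∑ d ∈ n.divisors, μ d * f d = ∏ p ∈ n.primeFactors, (1 - f p) := by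
  open UniqueFactorizationMonoid in
  have hdiv : {d ∈ n.divisors | Squarefree d} = (radical n).divisors := by
    ext d
    simp only [mem_filter, Nat.mem_divisors, radical_ne_zero, ne_eq, not_false_eq_true, and_true]
    exact ⟨fun ⟨⟨hd, _⟩, hsq⟩ => (dvd_radical_iff hsq.isRadical hn).2 hd,
      fun hd => ⟨⟨hd.trans radical_dvd_self, hn⟩, squarefree_radical.squarefree_of_dvd hd⟩⟩
  rw [← sum_filter_of_ne (p := Squarefree), hdiv,
    ← hf.prodPrimeFactors_one_sub_of_squarefree _ UniqueFactorizationMonoid.squarefree_radical,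
    Nat.primeFactors_radical]
  intro d _ hd
  by_contra hsq
  simp [moebius_eq_zero_of_not_squarefree hsq] at hd

noncomputable def coprimeInv (ℓ : ℕ) : ArithmeticFunction ℚ :=
  ⟨fun m => if m.Coprime ℓ then (m : ℚ)⁻¹ else 0, by simp⟩

theorem coprimeInv_apply (ℓ m : ℕ) :
    coprimeInv ℓ m = if m.Coprime ℓ then (m : ℚ)⁻¹ else 0 := rfl

theorem isMultiplicative_coprimeInv (ℓ : ℕ) : (coprimeInv ℓ).IsMultiplicative := by
  refine ⟨by simp [coprimeInv_apply], fun {m n} _ => ?_⟩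
  simp only [coprimeInv_apply, Nat.coprime_mul_iff_left, Nat.cast_mul, mul_inv]
  split_ifs <;> simp_all

theorem sum_divisors_moebius_mul_left_mul_div (ℓ : ℕ) {k : ℕ} (hk : k ≠ 0) :
    ∑ m ∈ k.divisors, (μ (ℓ * m) : ℚ) * (k / m : ℕ)
      = μ ℓ * (k * ∏ p ∈ k.primeFactors with ¬p ∣ ℓ, (1 - (p : ℚ)⁻¹)) := by
  calc ∑ m ∈ k.divisors, (μ (ℓ * m) : ℚ) * (k / m : ℕ)
      = ∑ m ∈ k.divisors, μ ℓ * k * (μ m * coprimeInv ℓ m) := by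
        refine sum_congr rfl fun m hm => ?_
        have hm0 : (m : ℚ) ≠ 0 := by simpa using (Nat.pos_of_mem_divisors hm).ne'
        rw [moebius_mul_eq_ite, coprimeInv_apply, Nat.cast_div (Nat.dvd_of_mem_divisors hm) hm0]
        by_cases h : ℓ.Coprime m
        · rw [if_pos h, if_pos h.symm]
          push_cast
          field_simp
        · simp [h, Nat.coprime_comm.not.1 h]
    _ = μ ℓ * k * ∏ p ∈ k.primeFactors, (1 - coprimeInv ℓ p) := by
        rw [← mul_sum, sum_divisors_moebius_mul_eq_prod_one_sub (isMultiplicative_coprimeInv ℓ) hk]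
    _ = μ ℓ * (k * ∏ p ∈ k.primeFactors with ¬p ∣ ℓ, (1 - (p : ℚ)⁻¹)) := by
        rw [prod_filter, mul_assoc]
        congr 2
        refine prod_congr rfl fun p hp => ?_
        simp only [coprimeInv_apply, (Nat.prime_of_mem_primeFactors hp).coprime_iff_not_dvd]
        split_ifs <;> simp

end ArithmeticFunction

open ArithmeticFunction in
theorem totient_mul_sum_moebius_general (n ℓ : ℕ) (hd : ℓ ∣ n) :
    (Nat.totient ℓ : ℤ) *
        ∑ d ∈ (Nat.divisors n).filter (fun d => ℓ ∣ d),
          moebius d * ((n / d : ℕ) : ℤ)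
      = moebius ℓ * Nat.totient n := by
  obtain ⟨k, rfl⟩ := hd
  rcases eq_or_ne (ℓ * k) 0 with h0 | h0
  · simp [h0]
  have hℓ : ℓ ≠ 0 := left_ne_zero_of_mul h0
  have hk : k ≠ 0 := right_ne_zero_of_mul h0
  rw [Nat.sum_divisors_filter_dvd_mul _ hℓ]
  simp only [Nat.mul_div_mul_left _ _ (Nat.pos_of_ne_zero hℓ)]
  apply Int.cast_injective (α := ℚ)
  simp only [Int.cast_mul, Int.cast_sum, Int.cast_natCast]
  rw [sum_divisors_moebius_mul_left_mul_div ℓ hk, Nat.totient_mul_eq_totient_mul_prod hℓ hk]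
  ring

open ArithmeticFunction in
/-- For `ℓ` a positive divisor of a positive integer `n`,
`φ(ℓ) · ∑_{ℓ ∣ d ∣ n} μ(d)·(n/d) = μ(ℓ)·φ(n)`. -/
theorem totient_mul_sum_moebius (n ℓ : ℕ) (hn : 0 < n) (hℓ : 0 < ℓ) (hd : ℓ ∣ n) :
    (Nat.totient ℓ : ℤ) *
        ∑ d ∈ (Nat.divisors n).filter (fun d => ℓ ∣ d),
          moebius d * ((n / d : ℕ) : ℤ)
      = moebius ℓ * Nat.totient n :=
  totient_mul_sum_moebius_general n ℓ hd
end

section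
/- Let n, r ≥ 1, let W = {words of length n over an alphabet of r letters} (functions from Fin n to Fin r), let γ be the linear endomorphism of the complex vector space with basis indexed by W that permutes basis vectors by cyclic shift of words, and let ε ∈ ℂ be a primitive n-th root of unity. Then the dimension of the eigenspace of γ with eigenvalue ε equals (1/n)·∑_{d | n} μ(d)·r^{n/d}, where μ denotes the Möbius function. -/
/-!
The shift `γ` has order `n`, so `P = n⁻¹ ∑_{k<n} ε⁻ᵏ γᵏ` is a projection onto the `ε`-eigenspace,
whose dimension is therefore `tr P = n⁻¹ ∑_{k<n} ε⁻ᵏ tr γᵏ`. The trace of `γᵏ` counts the words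
fixed by rotation by `k`; these are the words constant on the cosets of `⟨k⟩ ≤ ℤ/n`, so there are
`r ^ gcd(n, k)` of them. Writing `r ^ gcd(n, k) = ∑_{d ∣ gcd(n, k)} A d` with `A = μ ⋆ r^·` (Möbius
inversion) and summing the roots of unity `ε⁻ᵏ` over the multiples `k < n` of `d` leaves only the
term `d = n`, that is `A n`.
-/

open Module LinearMap Finset Function

section AveragingProjection

variable {K V : Type*} [Field K] [AddCommGroup V] [Module K V] {f : Module.End K V} {n : ℕ}
  {ε : K}

theorem isProj_eigenspace_of_pow_eq_one (hf : f ^ n = 1) (hε : ε ^ n = 1) (hn : (n : K) ≠ 0) :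
    IsProj (f.eigenspace ε) ((n : K)⁻¹ • ∑ k ∈ range n, (ε⁻¹ • f) ^ k) := by
  have hε0 : ε ≠ 0 := by
    rintro rfl
    have hn0 : n ≠ 0 := by rintro rfl; exact hn Nat.cast_zero
    simp [zero_pow hn0] at hε
  set g := ε⁻¹ • f
  have hg : g ^ n = 1 := by rw [smul_pow, hf, inv_pow, hε, inv_one, one_smul]
  have hmem : ∀ x, x ∈ f.eigenspace ε ↔ g x = x := fun x => by
    rw [Module.End.mem_eigenspace_iff, LinearMap.smul_apply, inv_smul_eq_iff₀ hε0]
  have hgS : g * ∑ k ∈ range n, g ^ k = ∑ k ∈ range n, g ^ k := by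
    have := mul_geom_sum g n
    rwa [hg, sub_self, sub_mul, one_mul, sub_eq_zero] at this
  refine ⟨fun x => ?_, fun x hx => ?_⟩
  · rw [hmem, ← Module.End.mul_apply, mul_smul_comm, hgS]
  · have hfix : ∀ k, (g ^ k) x = x := fun k => by
      rw [Module.End.pow_apply, iterate_fixed ((hmem x).1 hx)]
    simp only [LinearMap.smul_apply, LinearMap.coe_sum, Finset.sum_apply, hfix, sum_const,
      card_range]
    rw [← Nat.cast_smul_eq_nsmul K, inv_smul_smul₀ hn]

theorem natCast_mul_finrank_eigenspace_of_pow_eq_one [FiniteDimensional K V] (hf : f ^ n = 1)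
    (hε : ε ^ n = 1) (hn : (n : K) ≠ 0) :
    (n : K) * finrank K (f.eigenspace ε) = ∑ k ∈ range n, ε⁻¹ ^ k * trace K V (f ^ k) := by
  rw [← (isProj_eigenspace_of_pow_eq_one hf hε hn).trace, map_smul, smul_eq_mul,
    mul_inv_cancel_left₀ hn, map_sum]
  simp only [smul_pow, map_smul, smul_eq_mul]

end AveragingProjection

theorem LinearMap.funLeft_pow {R M W : Type*} [Semiring R] [AddCommMonoid M] [Module R M]
    (e : W → W) (k : ℕ) : funLeft R M e ^ k = funLeft R M e^[k] := by
  induction k with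
  | zero => rfl
  | succ k ih => rw [pow_succ, Module.End.mul_eq_comp, ih, ← funLeft_comp, iterate_succ']

theorem LinearMap.trace_funLeft {R W : Type*} [CommRing R] [Fintype W] [DecidableEq W]
    (e : W → W) : trace R (W → R) (funLeft R R e) = Nat.card {w // e w = w} := by
  rw [trace_eq_matrix_trace R (Pi.basisFun R W), Matrix.trace, Nat.card_eq_fintype_card,
    Fintype.card_subtype, ← Finset.sum_boole]
  refine Finset.sum_congr rfl fun w _ => ?_
  simp [Pi.single_apply, eq_comm]

section PeriodicWords

variable {G α : Type*} [AddGroup G]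

theorem periodic_iff_leftRel_zmultiples_le_ker {v : G → α} {a : G} :
    Periodic v a ↔ QuotientAddGroup.leftRel (AddSubgroup.zmultiples a) ≤ Setoid.ker v := by
  refine ⟨fun hv x y hxy => ?_, fun hv x => (hv (by simp [QuotientAddGroup.leftRel_apply])).symm⟩
  obtain ⟨m, hm⟩ := AddSubgroup.mem_zmultiples_iff.1 (QuotientAddGroup.leftRel_apply.1 hxy)
  rw [Setoid.ker_def, ← add_neg_cancel_left x y, ← hm]
  exact (hv.zsmul m x).symm

theorem Nat.card_periodic [Finite G] (a : G) :
    Nat.card {v : G → α // Periodic v a} = Nat.card α ^ (AddSubgroup.zmultiples a).index := by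
  rw [Nat.card_congr <| (Equiv.subtypeEquivRight fun _ =>
    periodic_iff_leftRel_zmultiples_le_ker).trans (Setoid.liftEquiv _), Nat.card_fun]
  rfl

theorem AddSubgroup.index_zmultiples [Finite G] (a : G) :
    (zmultiples a).index = Nat.card G / addOrderOf a := by
  rw [← index_mul_card, Nat.card_zmultiples, Nat.mul_div_cancel _ (addOrderOf_pos a)]

theorem iterate_comp_sub (a : G) (k : ℕ) :
    (fun (v : G → α) i => v (i - a))^[k] = fun v i => v (i - k • a) := by
  induction k with
  | zero => funext v i; simp
  | succ k ih =>
    rw [iterate_succ', ih]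
    funext v i
    simp only [comp_apply, succ_nsmul, sub_eq_add_neg, neg_add_rev, add_assoc]

theorem comp_sub_eq_self_iff {v : G → α} {a : G} : (fun i => v (i - a)) = v ↔ Periodic v a := by
  refine ⟨fun h i => ?_, fun h => funext fun i => ?_⟩
  · simpa using (congrFun h (i + a)).symm
  · rw [← h (i - a), sub_add_cancel]

end PeriodicWords

theorem Fin.addOrderOf_nsmul_one (n k : ℕ) [NeZero n] :
    addOrderOf (k • (1 : Fin n)) = n / n.gcd k := by
  open Fin.CommRing in
  rw [addOrderOf_nsmul, CharP.eq (Fin n) (CharP.addOrderOf_one _) (Fin.charP n)]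

theorem card_fixedPoints_iterate_comp_sub_one {α : Type*} [Finite α] (n k : ℕ) [NeZero n] :
    Nat.card {v : Fin n → α // (fun (v : Fin n → α) i => v (i - 1))^[k] v = v} =
      Nat.card α ^ n.gcd k := by
  simp_rw [iterate_comp_sub, comp_sub_eq_self_iff]
  rw [Nat.card_periodic, AddSubgroup.index_zmultiples, Nat.card_fin, Fin.addOrderOf_nsmul_one,
    Nat.div_div_self (Nat.gcd_dvd_left n k) (NeZero.ne n)]

section CharacterSum
open ArithmeticFunction

variable {R : Type*} [CommRing R]

theorem sum_divisors_sum_moebius_mul_pow (x : R) {m : ℕ} (hm : m ≠ 0) :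
    ∑ d ∈ m.divisors, ∑ e ∈ d.divisors, (moebius e : R) * x ^ (d / e) = x ^ m := by
  refine (sum_eq_iff_sum_smul_moebius_eq (g := (x ^ ·))).2 (fun d _ => ?_) m
    (Nat.pos_of_ne_zero hm)
  rw [Nat.sum_divisorsAntidiagonal (fun e f => (moebius e : ℤ) • x ^ f)]
  simp [zsmul_eq_mul]

theorem IsPrimitiveRoot.sum_range_filter_dvd_pow [IsDomain R] {ξ : R} {n d : ℕ}
    (hξ : IsPrimitiveRoot ξ n) (hd : d ∈ n.divisors) :
    ∑ k ∈ range n with d ∣ k, ξ ^ k = if d = n then 1 else 0 := by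
  obtain ⟨⟨m, rfl⟩, hn⟩ := Nat.mem_divisors.1 hd
  have hd0 : d ≠ 0 := left_ne_zero_of_mul hn
  have hm0 : m ≠ 0 := right_ne_zero_of_mul hn
  have hmultiples : {k ∈ range (d * m) | d ∣ k} =
      (range m).map ⟨(d * ·), mul_right_injective₀ hd0⟩ := by
    ext k
    simp only [mem_filter, mem_range, mem_map, Embedding.coeFn_mk]
    constructor
    · rintro ⟨hk, j, rfl⟩
      exact ⟨j, Nat.lt_of_mul_lt_mul_left hk, rfl⟩
    · rintro ⟨j, hj, rfl⟩
      exact ⟨Nat.mul_lt_mul_of_pos_left hj (Nat.pos_of_ne_zero hd0), dvd_mul_right d j⟩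
  rw [hmultiples, sum_map]
  simp only [Embedding.coeFn_mk, pow_mul]
  split_ifs with h
  · obtain rfl : m = 1 := by simpa [hd0] using h.symm
    simp
  · have hprim : IsPrimitiveRoot (ξ ^ d) m := by
      simpa [hd0] using hξ.pow_of_dvd hd0 (dvd_mul_right d m)
    have hm1 : m ≠ 1 := by rintro rfl; exact h (mul_one d).symm
    exact hprim.geom_sum_eq_zero (by omega)

theorem IsPrimitiveRoot.sum_range_pow_mul_pow_gcd [IsDomain R] {ξ : R} {n : ℕ}
    (hξ : IsPrimitiveRoot ξ n) (x : R) :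
    ∑ k ∈ range n, ξ ^ k * x ^ n.gcd k = ∑ d ∈ n.divisors, (moebius d : R) * x ^ (n / d) := by
  rcases eq_or_ne n 0 with rfl | hn
  · simp
  set A : ℕ → R := fun m => ∑ d ∈ m.divisors, (moebius d : R) * x ^ (m / d)
  have hgcd : ∀ k, x ^ n.gcd k = ∑ d ∈ n.divisors with d ∣ k, A d := fun k => by
    rw [← sum_divisors_sum_moebius_mul_pow x (Nat.gcd_ne_zero_left hn),
      ← Nat.divisors_filter_dvd_of_dvd hn (Nat.gcd_dvd_left n k)]
    refine sum_congr (filter_congr fun d hd => ?_) fun _ _ => rfl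
    rw [Nat.dvd_gcd_iff, and_iff_right (Nat.dvd_of_mem_divisors hd)]
  calc ∑ k ∈ range n, ξ ^ k * x ^ n.gcd k
      = ∑ d ∈ n.divisors, (∑ k ∈ range n with d ∣ k, ξ ^ k) * A d := by
        simp_rw [hgcd, sum_filter, mul_sum, sum_mul, ite_mul, zero_mul, mul_ite, mul_zero]
        exact sum_comm
    _ = A n := by
        rw [sum_congr rfl fun d hd => by rw [hξ.sum_range_filter_dvd_pow hd]]
        simp [Nat.mem_divisors_self n hn]

open ArithmeticFunction in
theorem dim_eigenspace_cyclic_shift_general (n r : ℕ) [NeZero n]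
    (ε : ℂ) (hε : IsPrimitiveRoot ε n) :
    (n : ℤ) * Module.finrank ℂ
        ↥(Module.End.eigenspace
          (LinearMap.funLeft ℂ ℂ
            (fun (v : Fin n → Fin r) (i : Fin n) => v (i - 1)) :
              Module.End ℂ ((Fin n → Fin r) → ℂ)) ε) =
      ∑ d ∈ Nat.divisors n, moebius d * (r : ℤ) ^ (n / d) := by
  set γ : Module.End ℂ ((Fin n → Fin r) → ℂ) :=
    funLeft ℂ ℂ (fun (v : Fin n → Fin r) (i : Fin n) => v (i - 1))
  have hγn : γ ^ n = 1 := by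
    have hn1 : n • (1 : Fin n) = 0 := by simpa using card_nsmul_eq_zero' (G := Fin n) (x := 1)
    rw [funLeft_pow, iterate_comp_sub]
    simp_rw [hn1, sub_zero]
    rfl
  have htrace (k : ℕ) : trace ℂ _ (γ ^ k) = (r : ℂ) ^ n.gcd k := by
    rw [funLeft_pow, trace_funLeft, card_fixedPoints_iterate_comp_sub_one, Nat.card_fin,
      Nat.cast_pow]
  have h := natCast_mul_finrank_eigenspace_of_pow_eq_one hγn hε.pow_eq_one
    (Nat.cast_ne_zero.2 (NeZero.ne n))
  simp_rw [htrace, hε.inv.sum_range_pow_mul_pow_gcd] at h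
  exact_mod_cast h

open ArithmeticFunction in
/-- Let `γ` be the linear endomorphism of the complex vector space with basis
the words of length `n` over `r` letters, permuting basis vectors by cyclic
shift, and let `ε` be a primitive `n`-th root of unity. Then
`n · dim (eigenspace of γ for ε) = ∑_{d ∣ n} μ(d) r^{n/d}`. -/
theorem dim_eigenspace_cyclic_shift (n r : ℕ) [NeZero n] (hr : 1 ≤ r)
    (ε : ℂ) (hε : IsPrimitiveRoot ε n) :
    (n : ℤ) * Module.finrank ℂ
        ↥(Module.End.eigenspace
          (LinearMap.funLeft ℂ ℂ
            (fun (v : Fin n → Fin r) (i : Fin n) => v (i - 1)) :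
              Module.End ℂ ((Fin n → Fin r) → ℂ)) ε) =
      ∑ d ∈ Nat.divisors n, moebius d * (r : ℤ) ^ (n / d) :=
  dim_eigenspace_cyclic_shift_general n r ε hε
end CharacterSum
end
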